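/- For each n with 1 ≤ n ≤ ω, there is a Borel map ψ : X_n → X_n which is a reduction of F_n to F_n and such that for every x in the image of ψ: x(i) ∈ (2^ℕ)^ℕ is injective for every i < n, and x(i) is separated for every i with 0 < i < n. -/

import Mathlib

open MeasureTheory

/-- Iterated powerset type over Cantor space: `It 0 = 2^ℕ`, `It (m+1) = Set (It m)`. -/
def It : ℕ → Type
  | 0 => ℕ → Bool
  | m + 1 => Set (It m)

/-- `aF x m l` is the set `a^{x,l}_{m+1}` from the recursive construction. -/
def aF (x : ℕ → ℕ → ℕ → Bool) : (m : ℕ) → ℕ → It (m + 1)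
  | 0, l => {z : It 0 | ∃ k, x 1 l k = true ∧ z = x 0 k}
  | m + 1, l => {z : It (m + 1) | ∃ k, x (m + 2) l k = true ∧ z = aF x m k}

/-- `AS x m` is the set `A^x_{m+1}` from the recursive construction. -/
def AS (x : ℕ → ℕ → ℕ → Bool) : (m : ℕ) → It (m + 1)
  | 0 => {z : It 0 | ∃ k, z = x 0 k}
  | m + 1 => {z : It (m + 1) | ∃ k, z = aF x m k}

/-- Extension of a finite tuple to an infinite sequence, by a junk value. -/
def extFin {n : ℕ} (x : Fin n → ℕ → ℕ → Bool) : ℕ → ℕ → ℕ → Bool :=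
  fun i => if h : i < n then x ⟨i, h⟩ else fun _ _ => true

/-- The domain `X_n ⊆ ((2^ℕ)^ℕ)^n`. -/
def XSet (n : ℕ) : Set (Fin n → ℕ → ℕ → Bool) :=
  {x | ∀ (i : ℕ) (_ : 1 ≤ i) (hn : i < n),
    (∀ m, ∃ k, x ⟨i, hn⟩ k m = true) ∧
    (∀ k, ∃ m, x ⟨i, hn⟩ k m = true) ∧
    (∀ k l₁ l₂,
      x ⟨i - 1, Nat.lt_of_le_of_lt (Nat.sub_le i 1) hn⟩ l₁ =
        x ⟨i - 1, Nat.lt_of_le_of_lt (Nat.sub_le i 1) hn⟩ l₂ →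
      x ⟨i, hn⟩ k l₁ = x ⟨i, hn⟩ k l₂)}

/-- The domain `X_ω ⊆ ((2^ℕ)^ℕ)^ω`. -/
def XInf : Set (ℕ → ℕ → ℕ → Bool) :=
  {x | ∀ (i : ℕ) (_ : 1 ≤ i),
    (∀ m, ∃ k, x i k m = true) ∧
    (∀ k, ∃ m, x i k m = true) ∧
    (∀ k l₁ l₂, x (i - 1) l₁ = x (i - 1) l₂ → x i k l₁ = x i k l₂)}

/-- The relation `F_n` (`x F_n y ↔ A^x_n = A^y_n`), as a relation on the ambient space.
For `n = 0` this is the trivial (full) relation. -/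
def Ffin (n : ℕ) (x y : Fin n → ℕ → ℕ → Bool) : Prop :=
  AS (extFin x) (n - 1) = AS (extFin y) (n - 1)

/-- The relation `F_ω` : `x F_ω y ↔ ∀ k ≥ 1, A^x_k = A^y_k`. -/
def Fomega (x y : ℕ → ℕ → ℕ → Bool) : Prop :=
  ∀ m, AS x m = AS y m

/-- The projection `u^n_k` to the first `k` coordinates. -/
def projFin {n : ℕ} (k : ℕ) (h : k ≤ n) (x : Fin n → ℕ → ℕ → Bool) :
    Fin k → ℕ → ℕ → Bool :=
  fun i => x (Fin.castLE h i)

/-- The projection `u^ω_k` to the first `k` coordinates. -/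
def projInf (k : ℕ) (x : ℕ → ℕ → ℕ → Bool) : Fin k → ℕ → ℕ → Bool :=
  fun i => x i.val

theorem projFin_mem {n k : ℕ} (h : k ≤ n) {x : Fin n → ℕ → ℕ → Bool}
    (hx : x ∈ XSet n) : projFin k h x ∈ XSet k :=
  fun i h1 hik => hx i h1 (lt_of_lt_of_le hik h)

theorem projInf_mem (k : ℕ) {x : ℕ → ℕ → ℕ → Bool} (hx : x ∈ XInf) :
    projInf k x ∈ XSet k :=
  fun i h1 _ => hx i h1

def projSubFin {n : ℕ} (k : ℕ) (h : k ≤ n) (x : ↥(XSet n)) : ↥(XSet k) :=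
  ⟨projFin k h x.1, projFin_mem h x.2⟩

def projSubInf (k : ℕ) (x : ↥XInf) : ↥(XSet k) :=
  ⟨projInf k x.1, projInf_mem k x.2⟩

/-- The domains of the iterated Friedman–Stanley jumps. -/
def fsSpace : ℕ → Type
  | 0 => ℕ → Bool
  | n + 1 => ℕ → fsSpace n

/-- The Friedman–Stanley jump of an equivalence relation. -/
def fsJump {X : Type} (E : X → X → Prop) (x y : ℕ → X) : Prop :=
  (∀ n, ∃ m, E (x n) (y m)) ∧ (∀ n, ∃ m, E (y n) (x m))

/-- The iterated Friedman–Stanley jump `=^{+n}`. -/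
def fsIter : (n : ℕ) → fsSpace n → fsSpace n → Prop
  | 0 => Eq
  | n + 1 => fsJump (fsIter n)

instance fsSpaceTopologicalSpace : (n : ℕ) → TopologicalSpace (fsSpace n)
  | 0 => inferInstanceAs (TopologicalSpace (ℕ → Bool))
  | n + 1 =>
    letI := fsSpaceTopologicalSpace n
    inferInstanceAs (TopologicalSpace (ℕ → fsSpace n))

instance fsSpaceMeasurableSpace : (n : ℕ) → MeasurableSpace (fsSpace n)
  | 0 => inferInstanceAs (MeasurableSpace (ℕ → Bool))
  | n + 1 =>
    letI := fsSpaceMeasurableSpace n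
    inferInstanceAs (MeasurableSpace (ℕ → fsSpace n))

/-- `=^{+ω}`, the product of the `=^{+k}`. -/
def fsOmega (x y : ∀ k, fsSpace k) : Prop :=
  ∀ k, fsIter k (x k) (y k)

/-- Borel reducibility of equivalence relations. -/
def BorelReducible {X Y : Type*} [MeasurableSpace X] [MeasurableSpace Y]
    (E : X → X → Prop) (F : Y → Y → Prop) : Prop :=
  ∃ f : X → Y, Measurable f ∧ ∀ a b, E a b ↔ F (f a) (f b)

/-- The Polish topology of pointwise convergence on the symmetric group of a
(countable, discrete) set. -/
def permTopology (A : Type*) : TopologicalSpace (Equiv.Perm A) :=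
  TopologicalSpace.induced (fun g => (g : A → A))
    (@Pi.topologicalSpace A (fun _ => A) fun _ => ⊥)

/-- The orbit equivalence relation of an action. -/
def OrbitRel {G Y : Type*} (act : G → Y → Y) (y₁ y₂ : Y) : Prop :=
  ∃ g, act g y₁ = y₂

/-- Classifiable by countable structures: Borel reducible to the orbit equivalence
relation of a continuous action of `S_∞` on a Polish space. -/
def ClassifiableByCountableStructures {X : Type*} [MeasurableSpace X]
    (E : X → X → Prop) : Prop :=
  ∃ (Y : Type) (_ : TopologicalSpace Y) (_ : MeasurableSpace Y),
    PolishSpace Y ∧ BorelSpace Y ∧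
    ∃ act : Equiv.Perm ℕ → Y → Y,
      (∀ y, act 1 y = y) ∧
      (∀ g h y, act (g * h) y = act g (act h y)) ∧
      (letI := permTopology ℕ
       Continuous fun p : Equiv.Perm ℕ × Y => act p.1 p.2) ∧
      BorelReducible E (OrbitRel act)

/-- `E` is prime to `F`. -/
def PrimeTo {X Y : Type*} [MeasurableSpace X] [MeasurableSpace Y]
    (E : X → X → Prop) (F : Y → Y → Prop) : Prop :=
  ∀ f : X → Y, Measurable f → (∀ a b, E a b → F (f a) (f b)) →
    ∃ y : Y, BorelReducible E (fun a b : {x : X // F (f x) y} => E a.1 b.1)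

/-- A sequence of elements of Cantor space is separated if any two distinct naturals
are separated by some member of the sequence. -/
def SeqSeparated (z : ℕ → ℕ → Bool) : Prop :=
  ∀ a b : ℕ, a ≠ b → ∃ i, z i a ≠ z i b

attribute [local instance] Classical.propDecidable

noncomputable section

/-- first/second components of the pairing -/
def pp1 (k : ℕ) : ℕ := (Nat.unpair k).1
def pp2 (k : ℕ) : ℕ := (Nat.unpair k).2

def gg (a : ℕ → Bool) (t : ℕ) : ℕ → Bool := fun n =>
  if n = 0 then false else if n % 2 = 1 then a (n / 2) else decide (n / 2 = t + 1)

def qq (t : ℕ) : ℕ → Bool := fun n =>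
  if n = 0 then true else if n % 2 = 1 then false else decide (n / 2 = t + 1)

lemma gg_inj {a a' t t'} (h : gg a t = gg a' t') : a = a' ∧ t = t' := by
  constructor
  · funext s
    have hm : (2 * s + 1) % 2 = 1 := by omega
    have hd : (2 * s + 1) / 2 = s := by omega
    have := congrFun h (2 * s + 1)
    simpa [gg, hm, hd] using this
  · have := congrFun h (2 * (t + 1))
    have h2 : (2 * (t + 1)) % 2 = 0 := by omega
    simp [gg, h2, Nat.ne_of_gt, Nat.mul_div_cancel_left] at this
    omega

lemma qq_inj {t t'} (h : qq t = qq t') : t = t' := by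
  have := congrFun h (2 * (t + 1))
  have h2 : (2 * (t + 1)) % 2 = 0 := by omega
  simp [qq, h2, Nat.mul_div_cancel_left] at this
  omega

lemma gg_ne_qq (a t t') : gg a t ≠ qq t' := by
  intro h
  have := congrFun h 0
  simp [gg, qq] at this

/-- identity conversion -/
def toSet {m : ℕ} (S : It (m + 1)) : Set (It m) := S

@[simp] lemma toSet_inj {m : ℕ} {S S' : It (m + 1)} : toSet S = toSet S' ↔ S = S' := Iff.rfl

/-- the `j`-th level objects encoded by the rows of `u`. -/
def pobj (u : ℕ → ℕ → ℕ → Bool) : (j : ℕ) → ℕ → It j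
  | 0 => u 0
  | j + 1 => aF u j

lemma aF_eq (u : ℕ → ℕ → ℕ → Bool) (j l : ℕ) :
    toSet (aF u j l) = {z : It j | ∃ k, u (j + 1) l k = true ∧ z = pobj u j k} := by
  cases j <;> rfl

lemma AS_eq (u : ℕ → ℕ → ℕ → Bool) (m : ℕ) :
    toSet (AS u m) = {z : It m | ∃ k, z = pobj u m k} := by
  cases m <;> rfl

/-- rank of row `l` within its `j`-th level equivalence class. -/
def rnk (u : ℕ → ℕ → ℕ → Bool) (j l : ℕ) : ℕ :=
  Nat.count (fun a => pobj u j a = pobj u j l) l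

def PIdx : ℕ → ℕ → ℕ
  | 0, t => 2 * t + 1
  | j + 1, t => 2 * PIdx j t + 1

lemma PIdx_odd (j t : ℕ) : PIdx j t % 2 = 1 := by cases j <;> simp [PIdx] <;> omega

lemma PIdx_inj {j t t'} (h : PIdx j t = PIdx j t') : t = t' := by
  induction j with
  | zero => simpa [PIdx] using h
  | succ j ih => exact ih (by simpa [PIdx] using h)

def PiO : (j : ℕ) → ℕ → It j
  | 0 => fun t => qq t
  | j + 1 => fun t => ({PiO j t} : Set (It j))

def NN : (j : ℕ) → Set (It j) → ℕ → Set (It j)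
  | 0 => fun S t => {z : It 0 | (∃ a ∈ S, ∃ s, z = gg a s) ∨ z = qq t}
  | j + 1 => fun S t =>
      {z : It (j + 1) | (∃ u ∈ S, ∃ s, toSet z = NN j (toSet u) s) ∨
        toSet z = ({PiO j t} : Set (It j))}

def Phi : (m : ℕ) → Set (It m) → Set (It m)
  | 0 => fun A => {z : It 0 | (∃ a ∈ A, ∃ t, z = gg a t) ∨ ∃ t, z = qq t}
  | m + 1 => fun A =>
      {z : It (m + 1) | (∃ S ∈ A, ∃ t, toSet z = NN m (toSet S) t) ∨
        ∃ o ∈ Phi m (⋃₀ (toSet '' A)), toSet z = ({o} : Set (It m))}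

def HNE : (m : ℕ) → It m → Prop
  | 0, _ => True
  | m + 1, S => (toSet S).Nonempty ∧ ∀ u ∈ toSet S, HNE m u

/-- duplication preprocessing -/
def DD (u : ℕ → ℕ → ℕ → Bool) : ℕ → ℕ → ℕ → Bool
  | 0 => fun k => u 0 (pp1 k)
  | i + 1 => fun l k => u (i + 1) (pp1 l) (pp1 k)

/-- the main level-wise transform -/
def TT (v : ℕ → ℕ → ℕ → Bool) : ℕ → ℕ → ℕ → Bool
  | 0 => fun k n =>
      if k % 2 = 1 then qq (k / 2) n
      else gg (v 0 (pp1 (k / 2))) (Nat.pair (rnk v 0 (pp1 (k / 2))) (pp2 (k / 2))) n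
  | i + 1 => fun l k =>
      if l % 2 = 1 then decide (k = l / 2)
      else if k % 2 = 1 then
        decide (k = PIdx i (Nat.pair (rnk v (i + 1) (pp1 (l / 2))) (pp2 (l / 2))))
      else decide (∃ k', v (i + 1) (pp1 (l / 2)) k' = true ∧
        pobj v i k' = pobj v i (pp1 (k / 2)))

end
-- chunk 2: semantic lemmas (appended to defs)
noncomputable section
open Classical

variable {v u : ℕ → ℕ → ℕ → Bool}

def InfC (v : ℕ → ℕ → ℕ → Bool) : Prop :=
  ∀ j l, {a | pobj v j a = pobj v j l}.Infinite

lemma mem_aF_iff {j l : ℕ} {z : It j} :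
    z ∈ toSet (aF u j l) ↔ ∃ k, u (j + 1) l k = true ∧ z = pobj u j k := by
  rw [aF_eq]; rfl

lemma mem_AS_iff {m : ℕ} {z : It m} :
    z ∈ toSet (AS u m) ↔ ∃ k, z = pobj u m k := by
  rw [AS_eq]; rfl

lemma count_congr {p q : ℕ → Prop} [DecidablePred p] [DecidablePred q]
    (h : ∀ a, p a ↔ q a) (n : ℕ) : Nat.count p n = Nat.count q n := by
  induction n with
  | zero => simp
  | succ n ih => rw [Nat.count_succ, Nat.count_succ, ih, if_congr (h n) rfl rfl]

lemma rnk_congr {j a b : ℕ} (h : pobj v j a = pobj v j b) (c : ℕ) :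
    Nat.count (fun x => pobj v j x = pobj v j a) c
      = Nat.count (fun x => pobj v j x = pobj v j b) c :=
  count_congr (fun x => by rw [h]) c

lemma rnk_surj (hinf : InfC v) (j l r : ℕ) :
    ∃ a, pobj v j a = pobj v j l ∧ rnk v j a = r := by
  set p := fun a => pobj v j a = pobj v j l with hp
  have hmem : p (Nat.nth p r) := Nat.nth_mem_of_infinite (hinf j l) r
  refine ⟨Nat.nth p r, hmem, ?_⟩
  have : rnk v j (Nat.nth p r) = Nat.count p (Nat.nth p r) := rnk_congr hmem _
  rw [this, Nat.count_nth_of_infinite (hinf j l)]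

lemma rnk_inj {j a b : ℕ} (h : pobj v j a = pobj v j b) (hr : rnk v j a = rnk v j b) :
    a = b := by
  by_contra hne
  rcases Nat.lt_or_ge a b with hab | hab
  · have h1 : rnk v j a = Nat.count (fun x => pobj v j x = pobj v j b) a := rnk_congr h a
    have := Nat.count_strict_mono (p := fun x => pobj v j x = pobj v j b) h hab
    rw [← h1, hr] at this; exact lt_irrefl _ this
  · have hba : b < a := lt_of_le_of_ne hab (Ne.symm hne)
    have h1 : rnk v j a = Nat.count (fun x => pobj v j x = pobj v j b) a := rnk_congr h a
    have := Nat.count_strict_mono (p := fun x => pobj v j x = pobj v j b) rfl hba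
    rw [← h1, hr] at this; exact lt_irrefl _ this

lemma odd_div (n : ℕ) : (2 * n + 1) / 2 = n := by omega
lemma odd_mod (n : ℕ) : (2 * n + 1) % 2 = 1 := by omega
lemma even_mod (a : ℕ) : (2 * a) % 2 = 0 := by omega
lemma even_div (a : ℕ) : (2 * a) / 2 = a := by omega
@[simp] lemma pp1_pair (a b : ℕ) : pp1 (Nat.pair a b) = a := by simp [pp1]
@[simp] lemma pp2_pair (a b : ℕ) : pp2 (Nat.pair a b) = b := by simp [pp2]
lemma pair_pp (k : ℕ) : Nat.pair (pp1 k) (pp2 k) = k := Nat.pair_unpair k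

lemma TT_zero (k n : ℕ) : TT v 0 k n =
    if k % 2 = 1 then qq (k / 2) n
    else gg (v 0 (pp1 (k / 2))) (Nat.pair (rnk v 0 (pp1 (k / 2))) (pp2 (k / 2))) n := rfl

lemma TT_succ (i l k : ℕ) : TT v (i + 1) l k =
    (if l % 2 = 1 then decide (k = l / 2)
      else if k % 2 = 1 then
        decide (k = PIdx i (Nat.pair (rnk v (i + 1) (pp1 (l / 2))) (pp2 (l / 2))))
      else decide (∃ k', v (i + 1) (pp1 (l / 2)) k' = true ∧
        pobj v i k' = pobj v i (pp1 (k / 2)))) := rfl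

lemma TT_zero_fn (k : ℕ) : TT v 0 k =
    if k % 2 = 1 then qq (k / 2)
    else gg (v 0 (pp1 (k / 2))) (Nat.pair (rnk v 0 (pp1 (k / 2))) (pp2 (k / 2))) := by
  funext n; rw [TT_zero]; by_cases h : k % 2 = 1 <;> simp [h]

lemma aF_TT_odd (j n : ℕ) : toSet (aF (TT v) j (2 * n + 1)) = {pobj (TT v) j n} := by
  ext z
  rw [mem_aF_iff]
  simp only [Set.mem_singleton_iff]
  constructor
  · rintro ⟨k, hb, rfl⟩
    rw [TT_succ, if_pos (odd_mod n)] at hb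
    have : k = n := by simpa [odd_div] using hb
    rw [this]
  · rintro rfl
    exact ⟨n, by rw [TT_succ, if_pos (odd_mod n)]; simp [odd_div], rfl⟩

lemma pobj_TT_PIdx (j t : ℕ) : pobj (TT v) j (PIdx j t) = PiO j t := by
  induction j with
  | zero =>
    show TT v 0 (2 * t + 1) = qq t
    funext n; rw [TT_zero, if_pos (odd_mod t), odd_div]
  | succ j ih =>
    show aF (TT v) j (2 * PIdx j t + 1) = PiO (j + 1) t
    rw [← toSet_inj, aF_TT_odd, ih]
    rfl

lemma aF_TT_even (hinf : InfC v) :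
    ∀ j l m, toSet (aF (TT v) j (2 * Nat.pair l m))
      = NN j (toSet (aF v j l)) (Nat.pair (rnk v (j + 1) l) m) := by
  intro j
  induction j with
  | zero =>
    intro l m
    ext z
    rw [mem_aF_iff]
    show _ ↔ (∃ a ∈ toSet (aF v 0 l), ∃ s, z = gg a s) ∨ z = qq (Nat.pair (rnk v 1 l) m)
    have hK : (2 * Nat.pair l m) % 2 = 0 := even_mod _
    have hK2 : (2 * Nat.pair l m) / 2 = Nat.pair l m := even_div _
    constructor
    · rintro ⟨k, hb, rfl⟩
      rw [TT_succ, if_neg (by omega)] at hb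
      rcases Nat.mod_two_eq_zero_or_one k with hk | hk
      · rw [if_neg (by omega)] at hb
        simp only [hK2, pp1_pair, pp2_pair, decide_eq_true_eq] at hb
        obtain ⟨k', hk', heq⟩ := hb
        left
        refine ⟨v 0 (pp1 (k / 2)), ?_,
          Nat.pair (rnk v 0 (pp1 (k / 2))) (pp2 (k / 2)), ?_⟩
        · refine mem_aF_iff.mpr ?_; exact ⟨k', hk', heq.symm⟩
        · show TT v 0 k = _
          rw [TT_zero_fn, if_neg (by omega)]
      · rw [if_pos hk] at hb
        simp only [hK2, pp1_pair, pp2_pair, decide_eq_true_eq] at hb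
        right
        rw [hb]
        show TT v 0 (PIdx 0 (Nat.pair (rnk v 1 l) m)) = _
        funext n'
        rw [TT_zero, if_pos (PIdx_odd 0 _)]
        show qq ((2 * Nat.pair (rnk v 1 l) m + 1) / 2) n' = _
        rw [odd_div]
    · rintro (⟨a, ha, s, rfl⟩ | rfl)
      · rw [mem_aF_iff] at ha
        obtain ⟨k'', hb'', ha⟩ := ha
        obtain ⟨k₀, hag, hrk⟩ := rnk_surj hinf 0 k'' (pp1 s)
        refine ⟨2 * Nat.pair k₀ (pp2 s), ?_, ?_⟩
        · rw [TT_succ, if_neg (by omega), if_neg (by omega)]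
          simp only [hK2, pp1_pair, even_div, decide_eq_true_eq]
          exact ⟨k'', hb'', hag.symm⟩
        · show gg a s = TT v 0 (2 * Nat.pair k₀ (pp2 s))
          rw [TT_zero_fn, if_neg (by omega)]
          simp only [even_div, pp1_pair, pp2_pair]
          have hva : v 0 k₀ = a := by
            have : pobj v 0 k₀ = a := by rw [hag, ← ha]
            exact this
          rw [hva, hrk, pair_pp]
      · refine ⟨PIdx 0 (Nat.pair (rnk v 1 l) m), ?_, ?_⟩
        · rw [TT_succ, if_neg (by omega), if_pos (PIdx_odd 0 _)]
          simp [hK2]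
        · show _ = TT v 0 (2 * Nat.pair (rnk v 1 l) m + 1)
          funext n'
          rw [TT_zero, if_pos (odd_mod _), odd_div]
  | succ j ih =>
    intro l m
    ext z
    rw [mem_aF_iff]
    show _ ↔ (∃ w ∈ toSet (aF v (j + 1) l), ∃ s, toSet z = NN j (toSet w) s) ∨
      toSet z = ({PiO j (Nat.pair (rnk v (j + 2) l) m)} : Set (It j))
    have hK : (2 * Nat.pair l m) % 2 = 0 := even_mod _
    have hK2 : (2 * Nat.pair l m) / 2 = Nat.pair l m := even_div _
    constructor
    · rintro ⟨k, hb, rfl⟩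
      rw [TT_succ, if_neg (by omega)] at hb
      rcases Nat.mod_two_eq_zero_or_one k with hk | hk
      · rw [if_neg (by omega)] at hb
        simp only [hK2, pp1_pair, pp2_pair, decide_eq_true_eq] at hb
        obtain ⟨k', hk', heq⟩ := hb
        left
        refine ⟨pobj v (j + 1) k', ?_, Nat.pair (rnk v (j + 1) (pp1 (k / 2))) (pp2 (k / 2)), ?_⟩
        · rw [mem_aF_iff]; exact ⟨k', hk', rfl⟩
        · have hrec : 2 * Nat.pair (pp1 (k / 2)) (pp2 (k / 2)) = k := by
            rw [pair_pp]; omega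
          have h2 := ih (pp1 (k / 2)) (pp2 (k / 2))
          rw [hrec] at h2
          show toSet (aF (TT v) j k) = _
          rw [h2]
          have h3 : pobj v (j + 1) k' = aF v j (pp1 (k / 2)) := heq
          rw [h3]
      · rw [if_pos hk] at hb
        simp only [hK2, pp1_pair, pp2_pair, decide_eq_true_eq] at hb
        right
        rw [hb, pobj_TT_PIdx]
        rfl
    · rintro (⟨w, hw, s, hz⟩ | hz)
      · rw [mem_aF_iff] at hw
        obtain ⟨k'', hb'', rfl⟩ := hw
        obtain ⟨l', hag, hrk⟩ := rnk_surj hinf (j + 1) k'' (pp1 s)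
        refine ⟨2 * Nat.pair l' (pp2 s), ?_, ?_⟩
        · rw [TT_succ, if_neg (by omega), if_neg (by omega)]
          simp only [hK2, pp1_pair, even_div, decide_eq_true_eq]
          exact ⟨k'', hb'', hag.symm⟩
        · rw [← toSet_inj, hz]
          symm
          show toSet (aF (TT v) j (2 * Nat.pair l' (pp2 s))) = _
          rw [ih l' (pp2 s), hrk]
          have h1 : aF v j l' = pobj v (j + 1) k'' := hag
          rw [h1, pair_pp]
      · refine ⟨PIdx (j + 1) (Nat.pair (rnk v (j + 2) l) m), ?_, ?_⟩
        · rw [TT_succ, if_neg (by omega), if_pos (PIdx_odd _ _)]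
          simp [hK2]
        · rw [← toSet_inj, hz, pobj_TT_PIdx]
          rfl

end
-- chunk 3
noncomputable section
open Classical

variable {v u : ℕ → ℕ → ℕ → Bool}

lemma mem_NN_zero {S : Set (It 0)} {t : ℕ} {z : It 0} :
    z ∈ NN 0 S t ↔ (∃ a ∈ S, ∃ s, z = gg a s) ∨ z = qq t := Iff.rfl

lemma mem_NN_succ {j : ℕ} {S : Set (It (j + 1))} {t : ℕ} {z : It (j + 1)} :
    z ∈ NN (j + 1) S t ↔
      (∃ w ∈ S, ∃ s, toSet z = NN j (toSet w) s) ∨ toSet z = ({PiO j t} : Set (It j)) :=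
  Iff.rfl

lemma mem_Phi_zero {A : Set (It 0)} {z : It 0} :
    z ∈ Phi 0 A ↔ (∃ a ∈ A, ∃ t, z = gg a t) ∨ ∃ t, z = qq t := Iff.rfl

lemma mem_Phi_succ {m : ℕ} {A : Set (It (m + 1))} {z : It (m + 1)} :
    z ∈ Phi (m + 1) A ↔
      (∃ S ∈ A, ∃ t, toSet z = NN m (toSet S) t) ∨
        ∃ o ∈ Phi m (⋃₀ (toSet '' A)), toSet z = ({o} : Set (It m)) := Iff.rfl

lemma XInf_cond1 (hx : u ∈ XInf) {i : ℕ} (hi : 1 ≤ i) (k : ℕ) : ∃ l, u i l k = true :=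
  (hx i hi).1 k

lemma XInf_cond2 (hx : u ∈ XInf) {i : ℕ} (hi : 1 ≤ i) (l : ℕ) : ∃ k, u i l k = true :=
  (hx i hi).2.1 l

lemma sUnion_AS (hx : u ∈ XInf) (m : ℕ) :
    ⋃₀ (toSet '' (toSet (AS u (m + 1)))) = toSet (AS u m) := by
  ext z
  simp only [Set.mem_sUnion, Set.mem_image]
  constructor
  · rintro ⟨T, ⟨S, hS, rfl⟩, hz⟩
    rw [mem_AS_iff] at hS
    obtain ⟨k, rfl⟩ := hS
    rw [show pobj u (m + 1) k = aF u m k from rfl] at hz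
    rw [mem_aF_iff] at hz
    obtain ⟨k₁, _, rfl⟩ := hz
    rw [mem_AS_iff]
    exact ⟨k₁, rfl⟩
  · intro hz
    rw [mem_AS_iff] at hz
    obtain ⟨k, rfl⟩ := hz
    obtain ⟨l, hl⟩ := XInf_cond1 hx (by omega : 1 ≤ m + 1) k
    refine ⟨toSet (aF u m l), ⟨aF u m l, ?_, rfl⟩, ?_⟩
    · rw [mem_AS_iff]
      exact ⟨l, rfl⟩
    · rw [mem_aF_iff]
      exact ⟨k, hl, rfl⟩

lemma AS_TT (hx : v ∈ XInf) (hinf : InfC v) :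
    ∀ m, toSet (AS (TT v) m) = Phi m (toSet (AS v m)) := by
  intro m
  induction m with
  | zero =>
    ext z
    rw [mem_AS_iff, mem_Phi_zero]
    constructor
    · rintro ⟨k, rfl⟩
      show ((∃ a ∈ toSet (AS v 0), ∃ t, TT v 0 k = gg a t) ∨ ∃ t, TT v 0 k = qq t)
      rcases Nat.mod_two_eq_zero_or_one k with hk | hk
      · left
        refine ⟨v 0 (pp1 (k / 2)), ?_,
          Nat.pair (rnk v 0 (pp1 (k / 2))) (pp2 (k / 2)), ?_⟩
        · refine mem_AS_iff.mpr ?_; exact ⟨pp1 (k / 2), rfl⟩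
        · show TT v 0 k = _
          rw [TT_zero_fn, if_neg (by omega)]
      · right
        exact ⟨k / 2, by rw [TT_zero_fn, if_pos hk]⟩
    · rintro (⟨a, ha, t, rfl⟩ | ⟨t, rfl⟩)
      · rw [mem_AS_iff] at ha
        obtain ⟨k', rfl⟩ := ha
        obtain ⟨k₀, hag, hrk⟩ := rnk_surj hinf 0 k' (pp1 t)
        refine ⟨2 * Nat.pair k₀ (pp2 t), ?_⟩
        show gg (pobj v 0 k') t = TT v 0 _
        rw [TT_zero_fn, if_neg (by omega)]
        simp only [even_div, pp1_pair, pp2_pair]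
        have hva : v 0 k₀ = pobj v 0 k' := hag
        rw [hva, hrk, pair_pp]
      · refine ⟨2 * t + 1, ?_⟩
        show qq t = TT v 0 (2 * t + 1)
        rw [TT_zero_fn, if_pos (odd_mod t), odd_div]
  | succ m ih =>
    ext z
    rw [mem_AS_iff, mem_Phi_succ]
    have hsu : ⋃₀ (toSet '' (toSet (AS v (m + 1)))) = toSet (AS v m) := sUnion_AS hx m
    constructor
    · rintro ⟨k, rfl⟩
      rcases Nat.mod_two_eq_zero_or_one k with hk | hk
      · left
        have hrec : 2 * Nat.pair (pp1 (k / 2)) (pp2 (k / 2)) = k := by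
          rw [pair_pp]; omega
        refine ⟨aF v m (pp1 (k / 2)), ?_, Nat.pair (rnk v (m + 1) (pp1 (k / 2))) (pp2 (k / 2)), ?_⟩
        · rw [mem_AS_iff]; exact ⟨pp1 (k / 2), rfl⟩
        · show toSet (aF (TT v) m k) = _
          conv_lhs => rw [← hrec]
          rw [aF_TT_even hinf]
      · right
        have hrec : 2 * (k / 2) + 1 = k := by omega
        refine ⟨pobj (TT v) m (k / 2), ?_, ?_⟩
        · rw [hsu, ← ih, mem_AS_iff]
          exact ⟨k / 2, rfl⟩
        · show toSet (aF (TT v) m k) = _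
          conv_lhs => rw [← hrec]
          rw [aF_TT_odd]
    · rintro (⟨S, hS, t, hz⟩ | ⟨o, ho, hz⟩)
      · rw [mem_AS_iff] at hS
        obtain ⟨l₀, rfl⟩ := hS
        obtain ⟨l, hag, hrk⟩ := rnk_surj hinf (m + 1) l₀ (pp1 t)
        refine ⟨2 * Nat.pair l (pp2 t), ?_⟩
        rw [← toSet_inj, hz]
        show _ = toSet (aF (TT v) m (2 * Nat.pair l (pp2 t)))
        rw [aF_TT_even hinf, hrk]
        have h1 : aF v m l = pobj v (m + 1) l₀ := hag
        rw [h1, pair_pp]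
      · rw [hsu, ← ih, mem_AS_iff] at ho
        obtain ⟨n, rfl⟩ := ho
        refine ⟨2 * n + 1, ?_⟩
        rw [← toSet_inj, hz]
        show _ = toSet (aF (TT v) m (2 * n + 1))
        rw [aF_TT_odd]

lemma HNE_aF (hx : v ∈ XInf) : ∀ m l, HNE (m + 1) (aF v m l) := by
  intro m
  induction m with
  | zero =>
    intro l
    obtain ⟨k, hk⟩ := XInf_cond2 hx (le_refl 1) l
    exact ⟨⟨v 0 k, by refine mem_aF_iff.mpr ?_; exact ⟨k, hk, rfl⟩⟩, fun u _ => trivial⟩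
  | succ m ih =>
    intro l
    obtain ⟨k, hk⟩ := XInf_cond2 hx (by omega : 1 ≤ m + 2) l
    refine ⟨⟨aF v m k, by rw [mem_aF_iff]; exact ⟨k, hk, rfl⟩⟩, ?_⟩
    intro w hw
    rw [mem_aF_iff] at hw
    obtain ⟨k₁, _, rfl⟩ := hw
    exact ih k₁

lemma HNE_AS (hx : v ∈ XInf) (m : ℕ) : ∀ z ∈ toSet (AS v m), HNE m z := by
  intro z hz
  rw [mem_AS_iff] at hz
  obtain ⟨k, rfl⟩ := hz
  cases m with
  | zero => trivial
  | succ m => exact HNE_aF hx m k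

lemma PiO_inj : ∀ {j t t'}, PiO j t = PiO j t' → t = t' := by
  intro j
  induction j with
  | zero => exact fun h => qq_inj h
  | succ j ih =>
    intro t t' h
    have : ({PiO j t} : Set (It j)) = {PiO j t'} := h
    exact ih (Set.singleton_eq_singleton_iff.mp this)

lemma NN_ne_singleton : ∀ (j : ℕ) (S : Set (It j)) (t : ℕ),
    S.Nonempty → (∀ w ∈ S, HNE j w) → ∀ o : It j, NN j S t ≠ {o} := by
  intro j
  induction j with
  | zero =>
    rintro S t ⟨a, ha⟩ _ o h
    have h1 : gg a 0 ∈ NN 0 S t := Or.inl ⟨a, ha, 0, rfl⟩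
    have h2 : qq t ∈ NN 0 S t := Or.inr rfl
    rw [h] at h1 h2
    exact gg_ne_qq a 0 t (h1.trans h2.symm)
  | succ j ih =>
    rintro S t ⟨w, hw⟩ hS o h
    have hw' := hS w hw
    have h1 : (show It (j + 1) from NN j (toSet w) 0) ∈ NN (j + 1) S t :=
      Or.inl ⟨w, hw, 0, rfl⟩
    have h2 : PiO (j + 1) t ∈ NN (j + 1) S t := Or.inr rfl
    rw [h] at h1 h2
    have h3 : (show It (j + 1) from NN j (toSet w) 0) = PiO (j + 1) t := h1.trans h2.symm
    have h4 : NN j (toSet w) 0 = ({PiO j t} : Set (It j)) := congrArg toSet h3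
    exact ih (toSet w) 0 hw'.1 hw'.2 (PiO j t) h4

lemma NN_inj : ∀ (j : ℕ) (S S' : Set (It j)) (t t' : ℕ),
    S.Nonempty → (∀ w ∈ S, HNE j w) → S'.Nonempty → (∀ w ∈ S', HNE j w) →
    NN j S t = NN j S' t' → S = S' ∧ t = t' := by
  intro j
  induction j with
  | zero =>
    intro S S' t t' _ _ _ _ h
    constructor
    · ext a
      constructor
      · intro ha
        have : gg a 0 ∈ NN 0 S' t' := h ▸ (Or.inl ⟨a, ha, 0, rfl⟩ : gg a 0 ∈ NN 0 S t)
        rcases this with ⟨a', ha', s', hgg⟩ | hgg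
        · exact (gg_inj hgg).1 ▸ ha'
        · exact absurd hgg (gg_ne_qq a 0 t')
      · intro ha
        have : gg a 0 ∈ NN 0 S t := h ▸ (Or.inl ⟨a, ha, 0, rfl⟩ : gg a 0 ∈ NN 0 S' t')
        rcases this with ⟨a', ha', s', hgg⟩ | hgg
        · exact (gg_inj hgg).1 ▸ ha'
        · exact absurd hgg (gg_ne_qq a 0 t)
    · have : qq t ∈ NN 0 S' t' := h ▸ (Or.inr rfl : qq t ∈ NN 0 S t)
      rcases this with ⟨a', _, s', hgg⟩ | hgg
      · exact absurd hgg.symm (gg_ne_qq a' s' t)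
      · exact qq_inj hgg
  | succ j ih =>
    intro S S' t t' hSne hS hS'ne hS' h
    constructor
    · ext w
      constructor
      · intro hw
        have : (show It (j + 1) from NN j (toSet w) 0) ∈ NN (j + 1) S' t' :=
          h ▸ (Or.inl ⟨w, hw, 0, rfl⟩ : _ ∈ NN (j + 1) S t)
        rcases this with ⟨w', hw', s', hnn⟩ | hnn
        · have hh := hS w hw
          have hh' := hS' w' hw'
          have : toSet w = toSet w' :=
            (ih (toSet w) (toSet w') 0 s' hh.1 hh.2 hh'.1 hh'.2 hnn).1
          exact (toSet_inj.mp this) ▸ hw'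
        · exact absurd hnn (NN_ne_singleton j (toSet w) 0 (hS w hw).1 (hS w hw).2 _)
      · intro hw
        have : (show It (j + 1) from NN j (toSet w) 0) ∈ NN (j + 1) S t :=
          h ▸ (Or.inl ⟨w, hw, 0, rfl⟩ : _ ∈ NN (j + 1) S' t')
        rcases this with ⟨w', hw', s', hnn⟩ | hnn
        · have hh := hS' w hw
          have hh' := hS w' hw'
          have : toSet w = toSet w' :=
            (ih (toSet w) (toSet w') 0 s' hh.1 hh.2 hh'.1 hh'.2 hnn).1
          exact (toSet_inj.mp this) ▸ hw'
        · exact absurd hnn (NN_ne_singleton j (toSet w) 0 (hS' w hw).1 (hS' w hw).2 _)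
    · have : PiO (j + 1) t ∈ NN (j + 1) S' t' := h ▸ (Or.inr rfl : _ ∈ NN (j + 1) S t)
      rcases this with ⟨w', hw', s', hnn⟩ | hnn
      · have hh' := hS' w' hw'
        exact absurd hnn.symm (NN_ne_singleton j (toSet w') s' hh'.1 hh'.2 _)
      · have : ({PiO j t} : Set (It j)) = {PiO j t'} := hnn
        exact PiO_inj (Set.singleton_eq_singleton_iff.mp this)

lemma Phi_inj : ∀ (m : ℕ) (A B : Set (It m)),
    (∀ S ∈ A, HNE m S) → (∀ S ∈ B, HNE m S) → Phi m A = Phi m B → A = B := by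
  intro m
  cases m with
  | zero =>
    intro A B _ _ h
    ext a
    constructor
    · intro ha
      have : gg a 0 ∈ Phi 0 B := h ▸ (Or.inl ⟨a, ha, 0, rfl⟩ : gg a 0 ∈ Phi 0 A)
      rcases this with ⟨a', ha', t', hgg⟩ | ⟨t, hgg⟩
      · exact (gg_inj hgg).1 ▸ ha'
      · exact absurd hgg (gg_ne_qq a 0 t)
    · intro ha
      have : gg a 0 ∈ Phi 0 A := h ▸ (Or.inl ⟨a, ha, 0, rfl⟩ : gg a 0 ∈ Phi 0 B)
      rcases this with ⟨a', ha', t', hgg⟩ | ⟨t, hgg⟩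
      · exact (gg_inj hgg).1 ▸ ha'
      · exact absurd hgg (gg_ne_qq a 0 t)
  | succ m =>
    intro A B hA hB h
    ext S
    constructor
    · intro hS
      have : (show It (m + 1) from NN m (toSet S) 0) ∈ Phi (m + 1) B :=
        h ▸ (Or.inl ⟨S, hS, 0, rfl⟩ : _ ∈ Phi (m + 1) A)
      rcases this with ⟨S', hS', t', hnn⟩ | ⟨o, _, hnn⟩
      · have hh := hA S hS
        have hh' := hB S' hS'
        have : toSet S = toSet S' :=
          (NN_inj m (toSet S) (toSet S') 0 t' hh.1 hh.2 hh'.1 hh'.2 hnn).1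
        exact (toSet_inj.mp this) ▸ hS'
      · exact absurd hnn (NN_ne_singleton m (toSet S) 0 (hA S hS).1 (hA S hS).2 _)
    · intro hS
      have : (show It (m + 1) from NN m (toSet S) 0) ∈ Phi (m + 1) A :=
        h ▸ (Or.inl ⟨S, hS, 0, rfl⟩ : _ ∈ Phi (m + 1) B)
      rcases this with ⟨S', hS', t', hnn⟩ | ⟨o, _, hnn⟩
      · have hh := hB S hS
        have hh' := hA S' hS'
        have : toSet S = toSet S' :=
          (NN_inj m (toSet S) (toSet S') 0 t' hh.1 hh.2 hh'.1 hh'.2 hnn).1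
        exact (toSet_inj.mp this) ▸ hS'
      · exact absurd hnn (NN_ne_singleton m (toSet S) 0 (hB S hS).1 (hB S hS).2 _)

end
-- chunk 4
noncomputable section
open Classical

variable {v u w : ℕ → ℕ → ℕ → Bool}

lemma pobj_DD : ∀ j l, pobj (DD u) j l = pobj u j (pp1 l) := by
  intro j
  induction j with
  | zero => intro l; rfl
  | succ j ih =>
    intro l
    show aF (DD u) j l = aF u j (pp1 l)
    rw [← toSet_inj, aF_eq, aF_eq]
    ext z
    simp only [Set.mem_setOf_eq]
    constructor
    · rintro ⟨k, hb, rfl⟩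
      refine ⟨pp1 k, ?_, ?_⟩
      · cases j <;> exact hb
      · rw [ih]
    · rintro ⟨k, hb, rfl⟩
      refine ⟨Nat.pair k 0, ?_, ?_⟩
      · show DD u (j + 1) l (Nat.pair k 0) = true
        show u (j + 1) (pp1 l) (pp1 (Nat.pair k 0)) = true
        rw [pp1_pair]; exact hb
      · rw [ih, pp1_pair]

lemma AS_DD (m : ℕ) : AS (DD u) m = AS u m := by
  rw [← toSet_inj]
  ext z
  rw [mem_AS_iff, mem_AS_iff]
  constructor
  · rintro ⟨k, rfl⟩; exact ⟨pp1 k, by rw [pobj_DD]⟩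
  · rintro ⟨k, rfl⟩; exact ⟨Nat.pair k 0, by rw [pobj_DD, pp1_pair]⟩

lemma DD_XInf (hx : u ∈ XInf) : DD u ∈ XInf := by
  intro i hi
  obtain ⟨i', rfl⟩ : ∃ i', i = i' + 1 := ⟨i - 1, by omega⟩
  refine ⟨?_, ?_, ?_⟩
  · intro m
    obtain ⟨l, hl⟩ := XInf_cond1 hx (by omega : 1 ≤ i' + 1) (pp1 m)
    refine ⟨Nat.pair l 0, ?_⟩
    show u (i' + 1) (pp1 (Nat.pair l 0)) (pp1 m) = true
    rw [pp1_pair]; exact hl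
  · intro k
    obtain ⟨m, hm⟩ := XInf_cond2 hx (by omega : 1 ≤ i' + 1) (pp1 k)
    refine ⟨Nat.pair m 0, ?_⟩
    show u (i' + 1) (pp1 k) (pp1 (Nat.pair m 0)) = true
    rw [pp1_pair]; exact hm
  · intro k l₁ l₂ h
    show u (i' + 1) (pp1 k) (pp1 l₁) = u (i' + 1) (pp1 k) (pp1 l₂)
    have h3 := (hx (i' + 1) (by omega)).2.2 (pp1 k) (pp1 l₁) (pp1 l₂)
    cases i' with
    | zero =>
      exact h3 h
    | succ j =>
      refine h3 ?_
      show u (j + 1) (pp1 l₁) = u (j + 1) (pp1 l₂)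
      funext c
      have h6 := congrFun h (Nat.pair c 0)
      have h5 : u (j + 1) (pp1 l₁) (pp1 (Nat.pair c 0))
          = u (j + 1) (pp1 l₂) (pp1 (Nat.pair c 0)) := h6
      simpa using h5

lemma InfC_DD : InfC (DD u) := by
  intro j l
  have hmem : ∀ b, Nat.pair (pp1 l) b ∈ {a | pobj (DD u) j a = pobj (DD u) j l} := by
    intro b
    show pobj (DD u) j (Nat.pair (pp1 l) b) = pobj (DD u) j l
    rw [pobj_DD, pobj_DD, pp1_pair]
  have hinj : Function.Injective (fun b => Nat.pair (pp1 l) b) := by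
    intro b b' hb
    have := congrArg pp2 hb
    simpa using this
  exact Set.infinite_of_injective_forall_mem hinj hmem

lemma TT_inj0 : Function.Injective (TT v 0) := by
  intro k k' h
  rw [TT_zero_fn, TT_zero_fn] at h
  rcases Nat.mod_two_eq_zero_or_one k with hk | hk <;>
    rcases Nat.mod_two_eq_zero_or_one k' with hk' | hk'
  · rw [if_neg (by omega), if_neg (by omega)] at h
    obtain ⟨h1, h2⟩ := gg_inj h
    have hr : rnk v 0 (pp1 (k / 2)) = rnk v 0 (pp1 (k' / 2)) := by
      have := congrArg pp1 h2; simpa using this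
    have hm : pp2 (k / 2) = pp2 (k' / 2) := by
      have := congrArg pp2 h2; simpa using this
    have hpe : pobj v 0 (pp1 (k / 2)) = pobj v 0 (pp1 (k' / 2)) := h1
    have h4 : pp1 (k / 2) = pp1 (k' / 2) := rnk_inj hpe hr
    have h5 : k / 2 = k' / 2 := by
      rw [← pair_pp (k / 2), ← pair_pp (k' / 2), h4, hm]
    omega
  · rw [if_neg (by omega), if_pos hk'] at h
    exact absurd h (gg_ne_qq _ _ _)
  · rw [if_pos hk, if_neg (by omega)] at h
    exact absurd h.symm (gg_ne_qq _ _ _)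
  · rw [if_pos hk, if_pos hk'] at h
    have := qq_inj h
    omega

lemma TT_succ_odd {i l k : ℕ} (h : l % 2 = 1) :
    TT v (i + 1) l k = decide (k = l / 2) := by
  rw [TT_succ, if_pos h]

lemma TT_succ_eo {i l k : ℕ} (h : l % 2 = 0) (h2 : k % 2 = 1) :
    TT v (i + 1) l k =
      decide (k = PIdx i (Nat.pair (rnk v (i + 1) (pp1 (l / 2))) (pp2 (l / 2)))) := by
  rw [TT_succ, if_neg (by omega), if_pos h2]

lemma TT_succ_ee {i l k : ℕ} (h : l % 2 = 0) (h2 : k % 2 = 0) :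
    TT v (i + 1) l k = decide (∃ k', v (i + 1) (pp1 (l / 2)) k' = true ∧
      pobj v i k' = pobj v i (pp1 (k / 2))) := by
  rw [TT_succ, if_neg (by omega), if_neg (by omega)]

lemma TT_row_obj {i l l' : ℕ} (hl : l % 2 = 0) (hl' : l' % 2 = 0)
    (hrow : ∀ c, TT v (i + 1) l c = TT v (i + 1) l' c) :
    toSet (aF v i (pp1 (l / 2))) = toSet (aF v i (pp1 (l' / 2))) := by
  have key : ∀ k, (∃ k', v (i + 1) (pp1 (l / 2)) k' = true ∧ pobj v i k' = pobj v i k)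
      ↔ (∃ k', v (i + 1) (pp1 (l' / 2)) k' = true ∧ pobj v i k' = pobj v i k) := by
    intro k
    have h1 := hrow (2 * Nat.pair k 0)
    rw [TT_succ_ee hl (by omega), TT_succ_ee hl' (by omega), decide_eq_decide] at h1
    simpa only [even_div, pp1_pair] using h1
  ext z
  rw [mem_aF_iff, mem_aF_iff]
  constructor
  · rintro ⟨k, hb, rfl⟩
    obtain ⟨k₂, hb₂, he₂⟩ := (key k).mp ⟨k, hb, rfl⟩
    exact ⟨k₂, hb₂, he₂.symm⟩
  · rintro ⟨k, hb, rfl⟩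
    obtain ⟨k₂, hb₂, he₂⟩ := (key k).mpr ⟨k, hb, rfl⟩
    exact ⟨k₂, hb₂, he₂.symm⟩

lemma TT_injS (hx : v ∈ XInf) (i : ℕ) : Function.Injective (TT v (i + 1)) := by
  intro l l' h
  have hrow : ∀ c, TT v (i + 1) l c = TT v (i + 1) l' c := fun c => congrFun h c
  rcases Nat.mod_two_eq_zero_or_one l with hl | hl <;>
    rcases Nat.mod_two_eq_zero_or_one l' with hl' | hl'
  · -- both even
    have hP := hrow (PIdx i (Nat.pair (rnk v (i + 1) (pp1 (l / 2))) (pp2 (l / 2))))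
    rw [TT_succ_eo hl (PIdx_odd _ _), TT_succ_eo hl' (PIdx_odd _ _),
      decide_eq_decide] at hP
    have htag := PIdx_inj (hP.mp rfl)
    have hr : rnk v (i + 1) (pp1 (l / 2)) = rnk v (i + 1) (pp1 (l' / 2)) := by
      have := congrArg pp1 htag; simpa using this
    have hm : pp2 (l / 2) = pp2 (l' / 2) := by
      have := congrArg pp2 htag; simpa using this
    have hobj := TT_row_obj (v := v) (i := i) hl hl' hrow
    have hpe : pobj v (i + 1) (pp1 (l / 2)) = pobj v (i + 1) (pp1 (l' / 2)) := by
      rw [← toSet_inj]; exact hobj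
    have h4 : pp1 (l / 2) = pp1 (l' / 2) := rnk_inj hpe hr
    have h5 : l / 2 = l' / 2 := by
      rw [← pair_pp (l / 2), ← pair_pp (l' / 2), h4, hm]
    omega
  · -- l even, l' odd : contradiction
    exfalso
    obtain ⟨k₁, hk₁⟩ := XInf_cond2 hx (by omega : 1 ≤ i + 1) (pp1 (l / 2))
    have hP := hrow (PIdx i (Nat.pair (rnk v (i + 1) (pp1 (l / 2))) (pp2 (l / 2))))
    rw [TT_succ_eo hl (PIdx_odd _ _), TT_succ_odd hl', decide_eq_decide] at hP
    have h1 : PIdx i (Nat.pair (rnk v (i + 1) (pp1 (l / 2))) (pp2 (l / 2))) = l' / 2 :=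
      hP.mp rfl
    have hE := hrow (2 * Nat.pair k₁ 0)
    rw [TT_succ_ee hl (by omega), TT_succ_odd hl', decide_eq_decide] at hE
    simp only [even_div, pp1_pair] at hE
    have h2 : 2 * Nat.pair k₁ 0 = l' / 2 := hE.mp ⟨k₁, hk₁, rfl⟩
    have hodd := PIdx_odd i (Nat.pair (rnk v (i + 1) (pp1 (l / 2))) (pp2 (l / 2)))
    omega
  · -- l odd, l' even : symmetric
    exfalso
    obtain ⟨k₁, hk₁⟩ := XInf_cond2 hx (by omega : 1 ≤ i + 1) (pp1 (l' / 2))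
    have hP := hrow (PIdx i (Nat.pair (rnk v (i + 1) (pp1 (l' / 2))) (pp2 (l' / 2))))
    rw [TT_succ_eo hl' (PIdx_odd _ _), TT_succ_odd hl, decide_eq_decide] at hP
    have h1 : PIdx i (Nat.pair (rnk v (i + 1) (pp1 (l' / 2))) (pp2 (l' / 2))) = l / 2 :=
      hP.mpr rfl
    have hE := hrow (2 * Nat.pair k₁ 0)
    rw [TT_succ_ee hl' (by omega), TT_succ_odd hl, decide_eq_decide] at hE
    simp only [even_div, pp1_pair] at hE
    have h2 : 2 * Nat.pair k₁ 0 = l / 2 := hE.mpr ⟨k₁, hk₁, rfl⟩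
    have hodd := PIdx_odd i (Nat.pair (rnk v (i + 1) (pp1 (l' / 2))) (pp2 (l' / 2)))
    omega
  · -- both odd
    have h1 := hrow (l / 2)
    rw [TT_succ_odd hl, TT_succ_odd hl', decide_eq_decide] at h1
    have := h1.mp rfl
    omega

lemma TT_inj (hx : v ∈ XInf) (i : ℕ) : Function.Injective (TT v i) := by
  cases i with
  | zero => exact TT_inj0
  | succ i => exact TT_injS hx i

lemma TT_XInf (hx : v ∈ XInf) : TT v ∈ XInf := by
  intro i hi
  obtain ⟨i', rfl⟩ : ∃ i', i = i' + 1 := ⟨i - 1, by omega⟩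
  refine ⟨?_, ?_, ?_⟩
  · intro m
    refine ⟨2 * m + 1, ?_⟩
    rw [TT_succ_odd (odd_mod m), odd_div]
    simp
  · intro l
    rcases Nat.mod_two_eq_zero_or_one l with hl | hl
    · refine ⟨PIdx i' (Nat.pair (rnk v (i' + 1) (pp1 (l / 2))) (pp2 (l / 2))), ?_⟩
      rw [TT_succ_eo hl (PIdx_odd _ _)]
      simp
    · refine ⟨l / 2, ?_⟩
      rw [TT_succ_odd hl]
      simp
  · intro k l₁ l₂ h
    have := TT_inj hx i' h
    rw [this]

lemma TT_sep (i : ℕ) : SeqSeparated (TT v (i + 1)) := by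
  intro a b hab
  refine ⟨2 * a + 1, ?_⟩
  rw [TT_succ_odd (odd_mod a), TT_succ_odd (odd_mod a), odd_div]
  simp [hab.symm]

lemma extFin_XInf {n : ℕ} {x : Fin n → ℕ → ℕ → Bool} (hx : x ∈ XSet n) :
    extFin x ∈ XInf := by
  intro i hi
  by_cases h : i < n
  · have hcond := hx i hi h
    have he : extFin x i = x ⟨i, h⟩ := dif_pos h
    have he' : extFin x (i - 1) = x ⟨i - 1, Nat.lt_of_le_of_lt (Nat.sub_le i 1) h⟩ :=
      dif_pos _
    refine ⟨?_, ?_, ?_⟩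
    · intro m; rw [he]; exact hcond.1 m
    · intro k; rw [he]; exact hcond.2.1 k
    · intro k l₁ l₂ hll
      rw [he]
      rw [he'] at hll
      exact hcond.2.2 k l₁ l₂ hll
  · have he : extFin x i = fun _ _ => true := dif_neg h
    refine ⟨fun m => ⟨0, by rw [he]⟩, fun k => ⟨0, by rw [he]⟩, fun k l₁ l₂ _ => by rw [he]⟩

lemma aF_agree : ∀ j, (∀ i, i ≤ j + 1 → u i = w i) → ∀ l, aF u j l = aF w j l := by
  intro j
  induction j with
  | zero =>
    intro h l
    show {z : It 0 | ∃ k, u 1 l k = true ∧ z = u 0 k}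
      = {z : It 0 | ∃ k, w 1 l k = true ∧ z = w 0 k}
    rw [h 0 (by omega), h 1 (by omega)]
  | succ j ih =>
    intro h l
    show {z : It (j + 1) | ∃ k, u (j + 2) l k = true ∧ z = aF u j k}
      = {z : It (j + 1) | ∃ k, w (j + 2) l k = true ∧ z = aF w j k}
    have h2 : ∀ k, aF u j k = aF w j k := ih (fun i hin => h i (by omega))
    rw [h (j + 2) (by omega)]
    ext z
    simp only [Set.mem_setOf_eq]
    constructor
    · rintro ⟨k, hb, rfl⟩; exact ⟨k, hb, (h2 k).symm ▸ rfl⟩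
    · rintro ⟨k, hb, rfl⟩; exact ⟨k, hb, (h2 k) ▸ rfl⟩

lemma AS_agree {m : ℕ} (h : ∀ i, i ≤ m → u i = w i) : AS u m = AS w m := by
  cases m with
  | zero =>
    show {z : It 0 | ∃ k, z = u 0 k} = {z : It 0 | ∃ k, z = w 0 k}
    rw [h 0 (by omega)]
  | succ m =>
    show {z : It (m + 1) | ∃ k, z = aF u m k} = {z : It (m + 1) | ∃ k, z = aF w m k}
    have h2 : ∀ k, aF u m k = aF w m k := aF_agree m (fun i hi => h i hi)
    ext z
    simp only [Set.mem_setOf_eq]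
    constructor
    · rintro ⟨k, rfl⟩; exact ⟨k, h2 k⟩
    · rintro ⟨k, rfl⟩; exact ⟨k, (h2 k).symm⟩

end
-- chunk 5 : measurability
noncomputable section
open Classical

abbrev Amb := ℕ → ℕ → ℕ → Bool

lemma meas_eval3 (i l k : ℕ) : Measurable fun u : Amb => u i l k :=
  (measurable_pi_apply k).comp ((measurable_pi_apply l).comp (measurable_pi_apply i))

lemma meas_bitset (i l k : ℕ) : MeasurableSet {u : Amb | u i l k = true} := by
  have : {u : Amb | u i l k = true} = (fun u : Amb => u i l k) ⁻¹' {true} := rfl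
  rw [this]
  exact meas_eval3 i l k (by trivial)

lemma meas_decide {α : Type*} [MeasurableSpace α] {P : α → Prop}
    (h : MeasurableSet {a | P a}) : Measurable fun a => decide (P a) := by
  have he : (fun a => decide (P a)) = fun a => if P a then true else false := by
    funext a; by_cases hp : P a <;> simp [hp]
  rw [he]
  exact Measurable.ite h measurable_const measurable_const

lemma pobj_eq_iff (u : Amb) (j a b : ℕ) :
    pobj u (j + 1) a = pobj u (j + 1) b ↔
      (∀ k, u (j + 1) a k = true →
        ∃ k', u (j + 1) b k' = true ∧ pobj u j k = pobj u j k') ∧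
      (∀ k, u (j + 1) b k = true →
        ∃ k', u (j + 1) a k' = true ∧ pobj u j k = pobj u j k') := by
  constructor
  · intro h
    constructor
    · intro k hk
      have : pobj u j k ∈ toSet (aF u j a) := by rw [mem_aF_iff]; exact ⟨k, hk, rfl⟩
      rw [show aF u j a = pobj u (j + 1) a from rfl, h] at this
      rw [show toSet (pobj u (j + 1) b) = toSet (aF u j b) from rfl, mem_aF_iff] at this
      obtain ⟨k', hk', he⟩ := this
      exact ⟨k', hk', he⟩
    · intro k hk
      have : pobj u j k ∈ toSet (aF u j b) := by rw [mem_aF_iff]; exact ⟨k, hk, rfl⟩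
      rw [show aF u j b = pobj u (j + 1) b from rfl, ← h] at this
      rw [show toSet (pobj u (j + 1) a) = toSet (aF u j a) from rfl, mem_aF_iff] at this
      obtain ⟨k', hk', he⟩ := this
      exact ⟨k', hk', he⟩
  · rintro ⟨h1, h2⟩
    show aF u j a = aF u j b
    rw [← toSet_inj]
    ext z
    rw [mem_aF_iff, mem_aF_iff]
    constructor
    · rintro ⟨k, hk, rfl⟩
      obtain ⟨k', hk', he⟩ := h1 k hk
      exact ⟨k', hk', he⟩
    · rintro ⟨k, hk, rfl⟩
      obtain ⟨k', hk', he⟩ := h2 k hk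
      exact ⟨k', hk', he⟩

lemma M_eq : ∀ j a b, MeasurableSet {u : Amb | pobj u j a = pobj u j b} := by
  intro j
  induction j with
  | zero =>
    intro a b
    have : {u : Amb | pobj u 0 a = pobj u 0 b}
        = ⋂ s, ({u : Amb | u 0 a s = true} ∩ {u | u 0 b s = true}) ∪
            ({u : Amb | u 0 a s = true}ᶜ ∩ {u | u 0 b s = true}ᶜ) := by
      ext u
      simp only [Set.mem_setOf_eq, Set.mem_iInter, Set.mem_union, Set.mem_inter_iff,
        Set.mem_compl_iff]
      constructor
      · intro h s
        have h' : u 0 a s = u 0 b s := congrFun h s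
        rcases Bool.eq_false_or_eq_true (u 0 a s) with h1 | h1 <;>
          rcases Bool.eq_false_or_eq_true (u 0 b s) with h2 | h2 <;>
            simp_all
      · intro h
        show (u 0 a : ℕ → Bool) = u 0 b
        funext s
        rcases h s with ⟨h1, h2⟩ | ⟨h1, h2⟩
        · rw [h1, h2]
        · simp only [Bool.not_eq_true] at h1 h2
          rw [h1, h2]
    rw [this]
    exact MeasurableSet.iInter fun s =>
      ((meas_bitset 0 a s).inter (meas_bitset 0 b s)).union
        (((meas_bitset 0 a s).compl).inter ((meas_bitset 0 b s).compl))
  | succ j ih =>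
    intro a b
    have : {u : Amb | pobj u (j + 1) a = pobj u (j + 1) b}
        = (⋂ k, {u : Amb | u (j + 1) a k = true}ᶜ ∪
            ⋃ k', ({u : Amb | u (j + 1) b k' = true} ∩
              {u | pobj u j k = pobj u j k'})) ∩
          (⋂ k, {u : Amb | u (j + 1) b k = true}ᶜ ∪
            ⋃ k', ({u : Amb | u (j + 1) a k' = true} ∩
              {u | pobj u j k = pobj u j k'})) := by
      ext u
      simp only [Set.mem_setOf_eq, Set.mem_inter_iff, Set.mem_iInter, Set.mem_union,
        Set.mem_compl_iff, Set.mem_iUnion, Bool.not_eq_true]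
      rw [pobj_eq_iff]
      constructor
      · rintro ⟨h1, h2⟩
        constructor
        · intro k
          by_cases hk : u (j + 1) a k = true
          · exact Or.inr (h1 k hk)
          · exact Or.inl (by simpa using hk)
        · intro k
          by_cases hk : u (j + 1) b k = true
          · exact Or.inr (h2 k hk)
          · exact Or.inl (by simpa using hk)
      · rintro ⟨h1, h2⟩
        constructor
        · intro k hk
          rcases h1 k with hc | hc
          · rw [hk] at hc; exact absurd hc (by simp)
          · exact hc
        · intro k hk
          rcases h2 k with hc | hc
          · rw [hk] at hc; exact absurd hc (by simp)
          · exact hc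
    rw [this]
    refine MeasurableSet.inter ?_ ?_
    · exact MeasurableSet.iInter fun k =>
        ((meas_bitset (j + 1) a k).compl).union
          (MeasurableSet.iUnion fun k' => (meas_bitset (j + 1) b k').inter (ih k k'))
    · exact MeasurableSet.iInter fun k =>
        ((meas_bitset (j + 1) b k).compl).union
          (MeasurableSet.iUnion fun k' => (meas_bitset (j + 1) a k').inter (ih k k'))

lemma M_rnk (j l : ℕ) : Measurable fun u : Amb => rnk u j l := by
  have he : (fun u : Amb => rnk u j l)
      = fun u => ∑ i ∈ Finset.range l, if pobj u j i = pobj u j l then 1 else 0 := by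
    funext u
    rw [rnk, Nat.count_eq_card_filter_range, Finset.card_filter]
  rw [he]
  exact Finset.measurable_sum _ fun i _ =>
    Measurable.ite (M_eq j i l) measurable_const measurable_const

lemma M_TT : ∀ i l k, Measurable fun v : Amb => TT v i l k := by
  intro i l k
  cases i with
  | zero =>
    by_cases hl : l % 2 = 1
    · have : (fun v : Amb => TT v 0 l k) = fun _ => qq (l / 2) k := by
        funext v; rw [TT_zero, if_pos hl]
      rw [this]; exact measurable_const
    · have : (fun v : Amb => TT v 0 l k) = fun v =>
          gg (v 0 (pp1 (l / 2))) (Nat.pair (rnk v 0 (pp1 (l / 2))) (pp2 (l / 2))) k := by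
        funext v; rw [TT_zero, if_neg hl]
      rw [this]
      by_cases hk0 : k = 0
      · subst hk0
        have : (fun v : Amb => gg (v 0 (pp1 (l / 2)))
            (Nat.pair (rnk v 0 (pp1 (l / 2))) (pp2 (l / 2))) 0) = fun _ => false := by
          funext v; rfl
        rw [this]; exact measurable_const
      · by_cases hk : k % 2 = 1
        · have : (fun v : Amb => gg (v 0 (pp1 (l / 2)))
              (Nat.pair (rnk v 0 (pp1 (l / 2))) (pp2 (l / 2))) k)
              = fun v => v 0 (pp1 (l / 2)) (k / 2) := by
            funext v; rw [gg]; rw [if_neg hk0, if_pos hk]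
          rw [this]; exact meas_eval3 0 (pp1 (l / 2)) (k / 2)
        · have : (fun v : Amb => gg (v 0 (pp1 (l / 2)))
              (Nat.pair (rnk v 0 (pp1 (l / 2))) (pp2 (l / 2))) k)
              = (fun r : ℕ => decide (k / 2 = Nat.pair r (pp2 (l / 2)) + 1)) ∘
                  (fun v => rnk v 0 (pp1 (l / 2))) := by
            funext v; show gg _ _ k = _; rw [gg]; rw [if_neg hk0, if_neg hk]; rfl
          rw [this]
          exact measurable_from_top.comp (M_rnk 0 (pp1 (l / 2)))
  | succ i =>
    by_cases hl : l % 2 = 1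
    · have : (fun v : Amb => TT v (i + 1) l k) = fun _ => decide (k = l / 2) := by
        funext v; rw [TT_succ_odd hl]
      rw [this]; exact measurable_const
    · by_cases hk : k % 2 = 1
      · have : (fun v : Amb => TT v (i + 1) l k)
            = (fun r : ℕ => decide (k = PIdx i (Nat.pair r (pp2 (l / 2))))) ∘
                (fun v => rnk v (i + 1) (pp1 (l / 2))) := by
          funext v; rw [TT_succ_eo (by omega) hk]; rfl
        rw [this]
        exact measurable_from_top.comp (M_rnk (i + 1) (pp1 (l / 2)))
      · have : (fun v : Amb => TT v (i + 1) l k)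
            = fun v => decide (∃ k', v (i + 1) (pp1 (l / 2)) k' = true ∧
                pobj v i k' = pobj v i (pp1 (k / 2))) := by
          funext v; rw [TT_succ_ee (by omega) (by omega)]
        rw [this]
        apply meas_decide
        have : {v : Amb | ∃ k', v (i + 1) (pp1 (l / 2)) k' = true ∧
            pobj v i k' = pobj v i (pp1 (k / 2))}
            = ⋃ k', ({v : Amb | v (i + 1) (pp1 (l / 2)) k' = true} ∩
                {v | pobj v i k' = pobj v i (pp1 (k / 2))}) := by
          ext v; simp [Set.mem_iUnion]
        rw [this]
        exact MeasurableSet.iUnion fun k' =>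
          (meas_bitset (i + 1) (pp1 (l / 2)) k').inter (M_eq i k' (pp1 (k / 2)))

lemma M_DD : Measurable (fun u : Amb => DD u) := by
  apply measurable_pi_lambda
  intro i
  apply measurable_pi_lambda
  intro l
  apply measurable_pi_lambda
  intro k
  cases i with
  | zero => exact meas_eval3 0 (pp1 l) k
  | succ i => exact meas_eval3 (i + 1) (pp1 l) (pp1 k)

lemma M_TTDD : Measurable (fun u : Amb => TT (DD u)) := by
  apply measurable_pi_lambda
  intro i
  apply measurable_pi_lambda
  intro l
  apply measurable_pi_lambda
  intro k
  exact (M_TT i l k).comp M_DD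

lemma M_extFin (n : ℕ) : Measurable (fun x : Fin n → ℕ → ℕ → Bool => extFin x) := by
  apply measurable_pi_lambda
  intro i
  by_cases h : i < n
  · have : (fun x : Fin n → ℕ → ℕ → Bool => extFin x i) = fun x => x ⟨i, h⟩ := by
      funext x; exact dif_pos h
    rw [this]
    exact measurable_pi_apply _
  · have : (fun x : Fin n → ℕ → ℕ → Bool => extFin x i) = fun _ => fun _ _ => true := by
      funext x; exact dif_neg h
    rw [this]
    exact measurable_const

end
-- chunk 6 : assembly helpers
noncomputable section
open Classical

lemma red_m {u w : Amb} (hu : u ∈ XInf) (hw : w ∈ XInf) (m : ℕ) :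
    AS u m = AS w m ↔ AS (TT (DD u)) m = AS (TT (DD w)) m := by
  have h1 : toSet (AS (TT (DD u)) m) = Phi m (toSet (AS u m)) := by
    rw [AS_TT (DD_XInf hu) InfC_DD m, AS_DD]
  have h2 : toSet (AS (TT (DD w)) m) = Phi m (toSet (AS w m)) := by
    rw [AS_TT (DD_XInf hw) InfC_DD m, AS_DD]
  constructor
  · intro h
    rw [← toSet_inj, h1, h2, h]
  · intro h
    rw [← toSet_inj] at h ⊢
    rw [h1, h2] at h
    exact Phi_inj m _ _ (HNE_AS hu m) (HNE_AS hw m) h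

lemma ext_proj_AS {n : ℕ} (hn : 1 ≤ n) (W : Amb) :
    AS (extFin (projInf n W)) (n - 1) = AS W (n - 1) := by
  apply AS_agree
  intro i hi
  have h : i < n := by omega
  show (if h' : i < n then projInf n W ⟨i, h'⟩ else fun _ _ => true) = W i
  rw [dif_pos h]
  rfl

end
/-- for each `1 ≤ n ≤ ω` there is a Borel reduction `ψ : F_n → F_n`
whose image consists of tuples of injective (and, except at the first coordinate,
separated) sequences. -/
theorem exists_reduction_to_injective_separated :
    (∀ n : ℕ, 1 ≤ n →
      ∃ ψ : ↥(XSet n) → ↥(XSet n), Measurable ψ ∧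
        (∀ x y : ↥(XSet n), Ffin n x.1 y.1 ↔ Ffin n (ψ x).1 (ψ y).1) ∧
        (∀ x ∈ Set.range ψ, ∀ i : Fin n,
          Function.Injective (x.1 i) ∧ (0 < i.val → SeqSeparated (x.1 i)))) ∧
    (∃ ψ : ↥XInf → ↥XInf, Measurable ψ ∧
        (∀ x y : ↥XInf, Fomega x.1 y.1 ↔ Fomega (ψ x).1 (ψ y).1) ∧
        (∀ x ∈ Set.range ψ, ∀ i : ℕ,
          Function.Injective (x.1 i) ∧ (0 < i → SeqSeparated (x.1 i)))) := by
  constructor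
  · -- finite case
    intro n hn
    refine ⟨fun x => ⟨projInf n (TT (DD (extFin x.1))),
      projInf_mem n (TT_XInf (DD_XInf (extFin_XInf x.2)))⟩, ?_, ?_, ?_⟩
    · apply Measurable.subtype_mk
      have h1 : Measurable fun x : ↥(XSet n) => extFin x.1 :=
        (M_extFin n).comp measurable_subtype_coe
      have h2 : Measurable fun x : ↥(XSet n) => TT (DD (extFin x.1)) := M_TTDD.comp h1
      exact (measurable_pi_lambda _ fun i : Fin n => measurable_pi_apply i.val).comp h2
    · intro x y
      have hx := extFin_XInf x.2
      have hy := extFin_XInf y.2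
      show Ffin n x.1 y.1 ↔ Ffin n _ _
      unfold Ffin
      rw [ext_proj_AS hn, ext_proj_AS hn]
      exact red_m hx hy (n - 1)
    · rintro x ⟨x₀, rfl⟩ i
      have hX : DD (extFin x₀.1) ∈ XInf := DD_XInf (extFin_XInf x₀.2)
      constructor
      · show Function.Injective (TT (DD (extFin x₀.1)) i.val)
        exact TT_inj hX i.val
      · intro hi
        show SeqSeparated (TT (DD (extFin x₀.1)) i.val)
        obtain ⟨i', he⟩ : ∃ i', i.val = i' + 1 := ⟨i.val - 1, by omega⟩
        rw [he]
        exact TT_sep i'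
  · -- infinite case
    refine ⟨fun x => ⟨TT (DD x.1), TT_XInf (DD_XInf x.2)⟩, ?_, ?_, ?_⟩
    · exact Measurable.subtype_mk (M_TTDD.comp measurable_subtype_coe)
    · intro x y
      constructor
      · intro h m
        exact (red_m x.2 y.2 m).mp (h m)
      · intro h m
        exact (red_m x.2 y.2 m).mpr (h m)
    · rintro x ⟨x₀, rfl⟩ i
      have hX : DD x₀.1 ∈ XInf := DD_XInf x₀.2
      constructor
      · exact TT_inj hX i
      · intro hi
        obtain ⟨i', he⟩ : ∃ i', i = i' + 1 := ⟨i - 1, by omega⟩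
        show SeqSeparated (TT (DD x₀.1) i)
        rw [he]
        exact TT_sep i'
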